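/- Let E be a real Banach space with weak type 2. Then there is a constant C > 0 such that for every n ∈ ℕ and all bounded linear maps u : ℓ²_n → E and v : E → ℓ²_n one has sup_{k≥1} k·a_k(v∘u) ≤ C·ℓ*(v)·π₂(u*). -/

import Mathlib

open MeasureTheory ProbabilityTheory NormedSpace

noncomputable section

/-- The `k`-th approximation number of a continuous linear map:
`a_k(T) = inf {‖T - S‖ : rank S < k}`. -/
def apxNum {X Y : Type*} [SeminormedAddCommGroup X] [NormedSpace ℝ X]
    [SeminormedAddCommGroup Y] [NormedSpace ℝ Y] (k : ℕ) (T : X →L[ℝ] Y) : ℝ :=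
  sInf {c : ℝ | ∃ S : X →L[ℝ] Y, LinearMap.rank (S : X →ₗ[ℝ] Y) < (k : Cardinal) ∧ c = ‖T - S‖}

/-- The standard Gaussian measure on `ℝⁿ`. -/
def gaussN (n : ℕ) : Measure (Fin n → ℝ) := Measure.pi fun _ => gaussianReal 0 1

/-- The ℓ-norm of `u : ℓ²ₙ → X`:
`ℓ(u) = (∫ ‖∑ tₖ u(eₖ)‖² dγₙ(t))^{1/2}`. -/
def ellNorm {X : Type*} [SeminormedAddCommGroup X] [NormedSpace ℝ X] {n : ℕ}
    (u : EuclideanSpace ℝ (Fin n) →L[ℝ] X) : ℝ :=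
  (∫ t, ‖∑ k, t k • u (EuclideanSpace.single k 1)‖ ^ 2 ∂(gaussN n)) ^ (1 / 2 : ℝ)

/-- The trace-dual norm of the ℓ-norm:
`ℓ*(v) = sup {|tr(v ∘ u)| : ℓ(u) ≤ 1}`. -/
def ellStar {X : Type*} [SeminormedAddCommGroup X] [NormedSpace ℝ X] {n : ℕ}
    (v : X →L[ℝ] EuclideanSpace ℝ (Fin n)) : ℝ :=
  sSup {c : ℝ | ∃ u : EuclideanSpace ℝ (Fin n) →L[ℝ] X, ellNorm u ≤ 1 ∧
    c = |LinearMap.trace ℝ (EuclideanSpace ℝ (Fin n)) ((v.comp u) : _ →ₗ[ℝ] _)|}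

/-- The weak-ℓ² norm of a finite family in `X`:
`sup {(∑ ξ(xᵢ)²)^{1/2} : ξ ∈ X*, ‖ξ‖ ≤ 1}`. -/
def weakl2 {X : Type*} [SeminormedAddCommGroup X] [NormedSpace ℝ X] {m : ℕ} (x : Fin m → X) : ℝ :=
  sSup {c : ℝ | ∃ ξ : X →L[ℝ] ℝ, ‖ξ‖ ≤ 1 ∧ c = (∑ i, ξ (x i) ^ 2) ^ (1 / 2 : ℝ)}

/-- The 2-summing norm `π₂(T)` of a continuous linear map. -/
def pi2 {X Y : Type*} [SeminormedAddCommGroup X] [NormedSpace ℝ X]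
    [SeminormedAddCommGroup Y] [NormedSpace ℝ Y] (T : X →L[ℝ] Y) : ℝ :=
  sInf {C : ℝ | 0 ≤ C ∧ ∀ (m : ℕ) (x : Fin m → X),
    (∑ i, ‖T (x i)‖ ^ 2) ^ (1 / 2 : ℝ) ≤ C * weakl2 x}

/-- The Banach-space adjoint (dual map) `T* : Y* → X*`. -/
def dualCLM {X Y : Type*} [SeminormedAddCommGroup X] [NormedSpace ℝ X]
    [SeminormedAddCommGroup Y] [NormedSpace ℝ Y] (T : X →L[ℝ] Y) :
    StrongDual ℝ Y →L[ℝ] StrongDual ℝ X :=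
  (ContinuousLinearMap.compL ℝ X Y ℝ).flip T

/-- The `k`-th Weyl number `x_k(T) = sup {a_k(T∘A) : A : ℓ₂ → X, ‖A‖ ≤ 1}`. -/
def weylNum {X Y : Type*} [SeminormedAddCommGroup X] [NormedSpace ℝ X]
    [SeminormedAddCommGroup Y] [NormedSpace ℝ Y] (k : ℕ) (T : X →L[ℝ] Y) : ℝ :=
  sSup {c : ℝ | ∃ A : (lp (fun _ : ℕ => ℝ) 2) →L[ℝ] X, ‖A‖ ≤ 1 ∧ c = apxNum k (T.comp A)}

/-- The Banach–Mazur distance between two normed spaces. -/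
def BMdist (X Y : Type*) [NormedAddCommGroup X] [NormedSpace ℝ X]
    [NormedAddCommGroup Y] [NormedSpace ℝ Y] : ℝ :=
  sInf {c : ℝ | ∃ w : X ≃L[ℝ] Y, c = ‖(w : X →L[ℝ] Y)‖ * ‖(w.symm : Y →L[ℝ] X)‖}

/-- The Hilbert–Schmidt norm of a map between finite-dimensional Euclidean spaces. -/
def HSnorm {n m : ℕ} (A : EuclideanSpace ℝ (Fin n) →L[ℝ] EuclideanSpace ℝ (Fin m)) : ℝ :=
  (∑ k, ‖A (EuclideanSpace.single k 1)‖ ^ 2) ^ (1 / 2 : ℝ)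

/-- `π₂*(u) = inf {‖A‖_HS ‖B‖ : u = B ∘ A}`, the trace dual of the 2-summing norm. -/
def pi2Star {X : Type*} [SeminormedAddCommGroup X] [NormedSpace ℝ X] {n : ℕ}
    (u : EuclideanSpace ℝ (Fin n) →L[ℝ] X) : ℝ :=
  sInf {c : ℝ | ∃ (m : ℕ) (A : EuclideanSpace ℝ (Fin n) →L[ℝ] EuclideanSpace ℝ (Fin m))
    (B : EuclideanSpace ℝ (Fin m) →L[ℝ] X), u = B.comp A ∧ c = HSnorm A * ‖B‖}

/-- `γ₂(T)`: factorization norm through a Hilbert space `ℓ²(ι)`. -/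
def gamma2 {X Y : Type*} [SeminormedAddCommGroup X] [NormedSpace ℝ X]
    [SeminormedAddCommGroup Y] [NormedSpace ℝ Y] (T : X →L[ℝ] Y) : ℝ :=
  sInf {c : ℝ | ∃ (ι : Type) (A : X →L[ℝ] lp (fun _ : ι => ℝ) 2)
    (B : (lp (fun _ : ι => ℝ) 2) →L[ℝ] Y), T = B.comp A ∧ c = ‖B‖ * ‖A‖}

/-- `X` has weak cotype 2 with constant `C`. -/
def WeakCotype2With (X : Type*) [NormedAddCommGroup X] [NormedSpace ℝ X] (C : ℝ) : Prop :=
  ∀ (n : ℕ) (u : EuclideanSpace ℝ (Fin n) →L[ℝ] X) (k : ℕ), 1 ≤ k →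
    Real.sqrt k * apxNum k u ≤ C * ellNorm u

/-- `X` has weak cotype 2. -/
def WeakCotype2 (X : Type*) [NormedAddCommGroup X] [NormedSpace ℝ X] : Prop :=
  ∃ C : ℝ, 0 < C ∧ WeakCotype2With X C

/-- `X` has weak type 2 with constant `C`. -/
def WeakType2With (X : Type*) [NormedAddCommGroup X] [NormedSpace ℝ X] (C : ℝ) : Prop :=
  ∀ (n : ℕ) (v : X →L[ℝ] EuclideanSpace ℝ (Fin n)) (k : ℕ), 1 ≤ k →
    Real.sqrt k * apxNum k v ≤ C * ellStar v

/-- `X` has weak type 2. -/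
def WeakType2 (X : Type*) [NormedAddCommGroup X] [NormedSpace ℝ X] : Prop :=
  ∃ C : ℝ, 0 < C ∧ WeakType2With X C

/-- The weak cotype 2 constant of `X`. -/
def wC2 (X : Type*) [NormedAddCommGroup X] [NormedSpace ℝ X] : ℝ :=
  sInf {C : ℝ | 0 ≤ C ∧ WeakCotype2With X C}

/-- The weak type 2 constant of `X`. -/
def wT2 (X : Type*) [NormedAddCommGroup X] [NormedSpace ℝ X] : ℝ :=
  sInf {C : ℝ | 0 ≤ C ∧ WeakType2With X C}

/-- The `k`-th Gaussian coefficient of `f : ℝⁿ → X`: `∫ gₖ(s) f(s) dγₙ(s)`. -/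
def gaussCoeff {X : Type*} [NormedAddCommGroup X] [NormedSpace ℝ X] {n : ℕ}
    (f : (Fin n → ℝ) → X) (k : Fin n) : X :=
  ∫ s, s k • f s ∂(gaussN n)

/-- The Gaussian projection `Qₙ` is bounded by `C` on `L²(γₙ; X)` for every `n`. -/
def KConvexWith (X : Type*) [NormedAddCommGroup X] [NormedSpace ℝ X] (C : ℝ) : Prop :=
  ∀ (n : ℕ) (f : (Fin n → ℝ) → X), MemLp f 2 (gaussN n) →
    (∫ t, ‖∑ k, t k • gaussCoeff f k‖ ^ 2 ∂(gaussN n)) ^ (1 / 2 : ℝ) ≤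
      C * (∫ t, ‖f t‖ ^ 2 ∂(gaussN n)) ^ (1 / 2 : ℝ)

/-- `X` is K-convex. -/
def KConvex (X : Type*) [NormedAddCommGroup X] [NormedSpace ℝ X] : Prop :=
  ∃ C : ℝ, 0 < C ∧ KConvexWith X C

/-- The K-convexity constant of `X`. -/
def Kconst (X : Type*) [NormedAddCommGroup X] [NormedSpace ℝ X] : ℝ :=
  sInf {C : ℝ | 0 ≤ C ∧ KConvexWith X C}

/-!
Let `k = ⌈m/2⌉` and let `S` approximate `v` with `rank S < k`. Since `v ∘ u` and `(v - S) ∘ u`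
differ by the map `S ∘ u` of rank `< k`, `a_{2k-1}(v ∘ u) ≤ a_k((v - S) ∘ u)`. For an operator `w`
between Euclidean spaces fewer than `k` eigenvalues of `w† w` exceed `‖w‖²_HS / k`, so
`√k · a_k(w) ≤ ‖w‖_HS`. Testing `π₂(u*)` on the coordinate functionals of `z = v - S`, whose weak
ℓ² norm is at most `‖z‖`, gives `‖z ∘ u‖_HS ≤ π₂(u*) ‖z‖`. Altogether
`√k · a_{2k-1}(v ∘ u) ≤ π₂(u*) a_k(v) ≤ C π₂(u*) ℓ*(v) / √k` by weak type 2, and `m ≤ 2k`.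
-/

section ApproximationNumbers

variable {X Y : Type*} [SeminormedAddCommGroup X] [NormedSpace ℝ X]
  [SeminormedAddCommGroup Y] [NormedSpace ℝ Y]

lemma apxNum_nonneg (k : ℕ) (T : X →L[ℝ] Y) : 0 ≤ apxNum k T :=
  Real.sInf_nonneg <| by rintro c ⟨S, -, rfl⟩; exact norm_nonneg _

lemma apxNum_le_norm_sub {k : ℕ} (T S : X →L[ℝ] Y)
    (hS : LinearMap.rank (S : X →ₗ[ℝ] Y) < k) : apxNum k T ≤ ‖T - S‖ :=
  csInf_le ⟨0, by rintro c ⟨S, -, rfl⟩; exact norm_nonneg _⟩ ⟨S, hS, rfl⟩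

lemma le_apxNum {k : ℕ} (hk : 1 ≤ k) {T : X →L[ℝ] Y} {x : ℝ}
    (h : ∀ S : X →L[ℝ] Y, LinearMap.rank (S : X →ₗ[ℝ] Y) < k → x ≤ ‖T - S‖) :
    x ≤ apxNum k T := by
  refine le_csInf ⟨‖T - 0‖, 0, ?_, rfl⟩ fun c ⟨S, hS, hc⟩ => hc ▸ h S hS
  simpa [Nat.one_le_iff_ne_zero, pos_iff_ne_zero] using hk

lemma le_mul_apxNum {k : ℕ} (hk : 1 ≤ k) {T : X →L[ℝ] Y} {x c : ℝ} (hc : 0 ≤ c)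
    (h : ∀ S : X →L[ℝ] Y, LinearMap.rank (S : X →ₗ[ℝ] Y) < k → x ≤ c * ‖T - S‖) :
    x ≤ c * apxNum k T := by
  rcases hc.eq_or_lt with rfl | hc
  · simpa using h 0 (by simpa [Nat.one_le_iff_ne_zero, pos_iff_ne_zero] using hk)
  · rw [← div_le_iff₀' hc]
    exact le_apxNum hk fun S hS => (div_le_iff₀' hc).2 (h S hS)

lemma apxNum_antitone {j k : ℕ} (hj : 1 ≤ j) (hjk : j ≤ k) (T : X →L[ℝ] Y) :
    apxNum k T ≤ apxNum j T :=
  le_apxNum hj fun S hS => apxNum_le_norm_sub T S (hS.trans_le (by exact_mod_cast hjk))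

lemma rank_add_lt {Z : Type*} [AddCommGroup Z] [Module ℝ Z] {f g : X →ₗ[ℝ] Z} {j k : ℕ}
    (hf : LinearMap.rank f < j) (hg : LinearMap.rank g < k) :
    LinearMap.rank (f + g) < (j + k - 1 : ℕ) := by
  obtain ⟨a, ha⟩ := Cardinal.lt_aleph0.1 (hf.trans Cardinal.natCast_lt_aleph0)
  obtain ⟨b, hb⟩ := Cardinal.lt_aleph0.1 (hg.trans Cardinal.natCast_lt_aleph0)
  rw [ha, Nat.cast_lt] at hf
  rw [hb, Nat.cast_lt] at hg
  calc LinearMap.rank (f + g) ≤ LinearMap.rank f + LinearMap.rank g := LinearMap.rank_add_le f g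
    _ = (a + b : ℕ) := by rw [ha, hb, Nat.cast_add]
    _ < (j + k - 1 : ℕ) := by exact_mod_cast (by omega : a + b < j + k - 1)

lemma apxNum_add_le_of_rank_lt {j k : ℕ} (hk : 1 ≤ k) (T R : X →L[ℝ] Y)
    (hR : LinearMap.rank (R : X →ₗ[ℝ] Y) < j) : apxNum (j + k - 1) (T + R) ≤ apxNum k T :=
  le_apxNum hk fun S hS => by
    have hsub : T + R - (R + S) = T - S := by abel
    simpa [hsub] using apxNum_le_norm_sub (T + R) (R + S) (by simpa using rank_add_lt hR hS)

end ApproximationNumbers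

open scoped RealInnerProductSpace

section HilbertSchmidt

open Finset InnerProductSpace

lemma card_filter_sum_lt_mul_lt {ι : Type*} (t : Finset ι) {μ : ι → ℝ} (hμ : ∀ i ∈ t, 0 ≤ μ i)
    {k : ℕ} (hk : 1 ≤ k) : #{i ∈ t | ∑ j ∈ t, μ j < k * μ i} < k := by
  set s := {i ∈ t | ∑ j ∈ t, μ j < k * μ i}
  by_contra! hks
  have hs : s.Nonempty := Finset.card_pos.1 (by omega)
  have hsum : ∑ j ∈ s, μ j ≤ ∑ j ∈ t, μ j :=
    sum_le_sum_of_subset_of_nonneg (filter_subset _ _) fun i hi _ => hμ i hi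
  have hlt : #s * ∑ j ∈ t, μ j < k * ∑ j ∈ s, μ j := by
    simpa [mul_sum] using sum_lt_sum_of_nonempty hs fun i hi => (mem_filter.1 hi).2
  have hQ : 0 ≤ ∑ j ∈ t, μ j := sum_nonneg hμ
  have hks' : (k : ℝ) ≤ #s := by exact_mod_cast hks
  nlinarith

variable {E F : Type*} [NormedAddCommGroup E] [InnerProductSpace ℝ E]
  [NormedAddCommGroup F] [InnerProductSpace ℝ F]

lemma rank_sum_rankOne_le {G : Type*} [SeminormedAddCommGroup G] [NormedSpace ℝ G] {ι : Type*}
    (s : Finset ι) (x : ι → G) (y : ι → E) :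
    LinearMap.rank ((∑ i ∈ s, rankOne ℝ (x i) (y i) : E →L[ℝ] G) : E →ₗ[ℝ] G) ≤ #s := by
  classical
  have hle : LinearMap.range ((∑ i ∈ s, rankOne ℝ (x i) (y i) : E →L[ℝ] G) : E →ₗ[ℝ] G) ≤
      Submodule.span ℝ (x '' s) := by
    rintro _ ⟨z, rfl⟩
    simpa using Submodule.sum_mem _ fun i hi =>
      Submodule.smul_mem _ _ (Submodule.subset_span (Set.mem_image_of_mem x hi))
  calc _ ≤ Module.rank ℝ (Submodule.span ℝ (x '' s)) := Submodule.rank_mono hle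
    _ ≤ Cardinal.mk (x '' s) := rank_span_le _
    _ ≤ #s := by
      rw [← Finset.coe_image]
      exact Cardinal.mk_coe_finset.trans_le (by exact_mod_cast Finset.card_image_le)

lemma apxNum_le_sqrt_of_norm_sq_eq_sum {ι : Type*} [Fintype ι] (A : E →L[ℝ] F)
    (b : OrthonormalBasis ι ℝ E) (μ : ι → ℝ) (hA : ∀ x, ‖A x‖ ^ 2 = ∑ i, μ i * ⟪b i, x⟫ ^ 2)
    (s : Finset ι) {r : ℝ} (hr : 0 ≤ r) (hμ : ∀ i ∉ s, μ i ≤ r) :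
    apxNum (#s + 1) A ≤ √r := by
  classical
  set S : E →L[ℝ] F := ∑ i ∈ s, rankOne ℝ (A (b i)) (b i)
  have hS : LinearMap.rank (S : E →ₗ[ℝ] F) < (#s + 1 : ℕ) :=
    (rank_sum_rankOne_le s _ _).trans_lt (by exact_mod_cast Nat.lt_succ_self _)
  refine (apxNum_le_norm_sub A S hS).trans <| ContinuousLinearMap.opNorm_le_bound _ (by positivity)
    fun x => ?_
  set y := x - ∑ i ∈ s, ⟪b i, x⟫ • b i
  have hy : (A - S) x = A y := by simp [S, y, map_sum, map_smul]
  have hby : ∀ j, ⟪b j, y⟫ = if j ∈ s then 0 else ⟪b j, x⟫ := fun j => by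
    simp only [y, inner_sub_right, inner_sum, inner_smul_right, orthonormal_iff_ite.1 b.orthonormal]
    split_ifs <;> simp [*]
  have hAy : ‖A y‖ ^ 2 ≤ (√r * ‖x‖) ^ 2 := by
    rw [hA, mul_pow, Real.sq_sqrt hr, ← b.sum_sq_inner_right, mul_sum]
    refine sum_le_sum fun j _ => ?_
    rw [hby]
    split_ifs with hj
    · simpa using mul_nonneg hr (sq_nonneg ⟪b j, x⟫)
    · exact mul_le_mul_of_nonneg_right (hμ j hj) (sq_nonneg _)
  rw [hy]
  exact (sq_le_sq₀ (norm_nonneg _) (by positivity)).1 hAy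

variable [FiniteDimensional ℝ E] [FiniteDimensional ℝ F] {n : ℕ} (hn : Module.finrank ℝ E = n)

lemma norm_sq_apply_eq_sum_eigenvalues (A : E →ₗ[ℝ] F) (x : E) :
    ‖A x‖ ^ 2 = ∑ i, (A.isSymmetric_adjoint_comp_self.eigenvalues hn i) *
      ⟪A.isSymmetric_adjoint_comp_self.eigenvectorBasis hn i, x⟫ ^ 2 := by
  set hT := A.isSymmetric_adjoint_comp_self
  set b := hT.eigenvectorBasis hn
  rw [← real_inner_self_eq_norm_sq, ← LinearMap.adjoint_inner_left, ← b.sum_inner_mul_inner]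
  refine Finset.sum_congr rfl fun i _ => ?_
  rw [← LinearMap.comp_apply, hT, hT.apply_eigenvectorBasis, real_inner_smul_right,
    real_inner_comm]
  simp only [Real.ringHom_apply]
  ring

lemma sum_eigenvalues_adjoint_comp_self (A : E →ₗ[ℝ] F) {ι : Type*} [Fintype ι]
    (c : OrthonormalBasis ι ℝ E) :
    ∑ i, A.isSymmetric_adjoint_comp_self.eigenvalues hn i = ∑ j, ‖A (c j)‖ ^ 2 := by
  rw [← RCLike.re_to_real (x := ∑ _, _),
    ← A.isSymmetric_adjoint_comp_self.re_trace_eq_sum_eigenvalues hn,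
    LinearMap.trace_eq_sum_inner _ c]
  simp [LinearMap.adjoint_inner_right]

lemma sqrt_mul_apxNum_le_sqrt_sum_norm_sq {ι : Type*} [Fintype ι] (A : E →L[ℝ] F)
    (c : OrthonormalBasis ι ℝ E) {k : ℕ} (hk : 1 ≤ k) :
    √k * apxNum k A ≤ √(∑ j, ‖A (c j)‖ ^ 2) := by
  set hT := (A : E →ₗ[ℝ] F).isSymmetric_adjoint_comp_self
  set μ := hT.eigenvalues rfl
  set Q := ∑ j, ‖A (c j)‖ ^ 2
  have hμ : ∀ i, 0 ≤ μ i := (A : E →ₗ[ℝ] F).isPositive_adjoint_comp_self.nonneg_eigenvalues rfl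
  have hQ : ∑ i, μ i = Q := sum_eigenvalues_adjoint_comp_self rfl _ c
  have hk0 : (0 : ℝ) < k := by exact_mod_cast hk
  set s : Finset (Fin _) := {i | Q < k * μ i}
  have hs : #s < k := by simpa [← hQ, s] using card_filter_sum_lt_mul_lt univ (fun i _ => hμ i) hk
  have htrunc : apxNum (#s + 1) A ≤ √(Q / k) :=
    apxNum_le_sqrt_of_norm_sq_eq_sum A (hT.eigenvectorBasis rfl) μ
      (norm_sq_apply_eq_sum_eigenvalues rfl (A : E →ₗ[ℝ] F)) s (by positivity)
      fun i hi => by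
        rw [le_div_iff₀' hk0]
        simpa [s] using hi
  calc √k * apxNum k A ≤ √k * √(Q / k) :=
        mul_le_mul_of_nonneg_left ((apxNum_antitone (by omega) hs A).trans htrunc) (by positivity)
    _ = √Q := by rw [← Real.sqrt_mul hk0.le, mul_div_cancel₀ _ hk0.ne']

lemma sqrt_mul_apxNum_le_HSnorm {n m : ℕ}
    (A : EuclideanSpace ℝ (Fin n) →L[ℝ] EuclideanSpace ℝ (Fin m)) {k : ℕ} (hk : 1 ≤ k) :
    √k * apxNum k A ≤ HSnorm A := by
  rw [HSnorm, ← Real.sqrt_eq_rpow]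
  simpa using
    sqrt_mul_apxNum_le_sqrt_sum_norm_sq A (EuclideanSpace.basisFun (Fin n) ℝ) hk

end HilbertSchmidt

section TwoSumming

open Finset

variable {X : Type*} [NormedAddCommGroup X] [NormedSpace ℝ X]

lemma weakl2_nonneg {m : ℕ} (x : Fin m → X) : 0 ≤ weakl2 x :=
  Real.sSup_nonneg <| by rintro _ ⟨ξ, -, rfl⟩; positivity

lemma sqrt_sum_sq_le_weakl2 {m : ℕ} (x : Fin m → X) {ξ : StrongDual ℝ X} (hξ : ‖ξ‖ ≤ 1) :
    √(∑ i, ξ (x i) ^ 2) ≤ weakl2 x := by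
  have hbdd : BddAbove {c : ℝ | ∃ ξ : StrongDual ℝ X, ‖ξ‖ ≤ 1 ∧
      c = (∑ i, ξ (x i) ^ 2) ^ (1 / 2 : ℝ)} := by
    refine ⟨√(∑ i, ‖x i‖ ^ 2), ?_⟩
    rintro _ ⟨ξ, hξ, rfl⟩
    rw [← Real.sqrt_eq_rpow]
    refine Real.sqrt_le_sqrt (sum_le_sum fun i _ => sq_le_sq.2 ?_)
    simpa using ξ.le_of_opNorm_le hξ (x i)
  rw [Real.sqrt_eq_rpow]
  exact le_csSup hbdd ⟨ξ, hξ, rfl⟩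

lemma sqrt_sum_sq_le_weakl2_mul_norm {m : ℕ} (x : Fin m → X) (φ : StrongDual ℝ X) :
    √(∑ i, φ (x i) ^ 2) ≤ weakl2 x * ‖φ‖ := by
  rcases eq_or_ne φ 0 with rfl | hφ
  · simp
  have hφ' : 0 < ‖φ‖ := norm_pos_iff.2 hφ
  have hψ : ‖‖φ‖⁻¹ • φ‖ ≤ 1 := by rw [norm_smul, norm_inv, norm_norm, inv_mul_cancel₀ hφ'.ne']
  have h := sqrt_sum_sq_le_weakl2 x hψ
  simp only [smul_apply, smul_eq_mul, mul_pow, ← mul_sum] at h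
  rwa [Real.sqrt_mul (by positivity), Real.sqrt_sq (by positivity), inv_mul_le_iff₀ hφ',
    mul_comm] at h

lemma weakl2_le_of_norm_sum_smul_le {m : ℕ} (x : Fin m → X) {M : ℝ} (hM : 0 ≤ M)
    (h : ∀ a : Fin m → ℝ, ‖∑ i, a i • x i‖ ≤ M * √(∑ i, a i ^ 2)) : weakl2 x ≤ M := by
  refine csSup_le ⟨_, 0, by simp, rfl⟩ ?_
  rintro _ ⟨ξ, hξ, rfl⟩
  rw [← Real.sqrt_eq_rpow]
  set a := fun i => ξ (x i)
  set t := √(∑ i, a i ^ 2)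
  have hsum : t * t ≤ M * t :=
    calc t * t = ξ (∑ i, a i • x i) := by
          rw [Real.mul_self_sqrt (sum_nonneg fun i _ => sq_nonneg _)]
          simp [a, sq]
      _ ≤ ‖ξ (∑ i, a i • x i)‖ := le_abs_self _
      _ ≤ ‖∑ i, a i • x i‖ := (ξ.le_of_opNorm_le hξ _).trans_eq (one_mul _)
      _ ≤ M * t := h a
  nlinarith [Real.sqrt_nonneg (∑ i, a i ^ 2)]

variable {Y : Type*} [SeminormedAddCommGroup Y] [NormedSpace ℝ Y]

lemma sqrt_sum_sq_norm_le_pi2_mul_weakl2 {T : X →L[ℝ] Y}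
    (hT : ∃ C, 0 ≤ C ∧ ∀ (m : ℕ) (x : Fin m → X), √(∑ i, ‖T (x i)‖ ^ 2) ≤ C * weakl2 x)
    {m : ℕ} (x : Fin m → X) : √(∑ i, ‖T (x i)‖ ^ 2) ≤ pi2 T * weakl2 x := by
  obtain ⟨C, hC, hCT⟩ := hT
  rcases (weakl2_nonneg x).eq_or_lt with hx | hx
  · simpa [← hx] using hCT m x
  rw [← div_le_iff₀ hx]
  refine le_csInf ⟨C, hC, by simpa only [← Real.sqrt_eq_rpow] using hCT⟩ ?_
  rintro C' ⟨-, hC'⟩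
  rw [div_le_iff₀ hx, Real.sqrt_eq_rpow]
  exact hC' m x

end TwoSumming

section TwoSummingAdjoint

open Finset NormedSpace

variable {E : Type*} [NormedAddCommGroup E] [NormedSpace ℝ E]

lemma pi2_nonneg {Y : Type*} [SeminormedAddCommGroup Y] [NormedSpace ℝ Y] (T : E →L[ℝ] Y) :
    0 ≤ pi2 T :=
  Real.sInf_nonneg fun _ hC => hC.1

lemma sqrt_sum_sq_norm_dualCLM_le {H : Type*} [NormedAddCommGroup H] [InnerProductSpace ℝ H]
    {ι : Type*} [Fintype ι] (c : OrthonormalBasis ι ℝ H) (u : H →L[ℝ] E) {m : ℕ}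
    (ξ : Fin m → StrongDual ℝ E) :
    √(∑ i, ‖dualCLM u (ξ i)‖ ^ 2) ≤ √(∑ j, ‖u (c j)‖ ^ 2) * weakl2 ξ := by
  have hterm : ∀ j, ∑ i, ξ i (u (c j)) ^ 2 ≤ (weakl2 ξ * ‖u (c j)‖) ^ 2 := fun j =>
    (Real.sqrt_le_iff.1 <|
      (sqrt_sum_sq_le_weakl2_mul_norm ξ (inclusionInDoubleDual ℝ E (u (c j)))).trans
        (mul_le_mul_of_nonneg_left (double_dual_bound ℝ E _) (weakl2_nonneg ξ))).2
  calc √(∑ i, ‖dualCLM u (ξ i)‖ ^ 2) = √(∑ j, ∑ i, ξ i (u (c j)) ^ 2) := by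
        simp_rw [c.norm_dual]
        rw [sum_comm]
        rfl
    _ ≤ √(∑ j, (weakl2 ξ * ‖u (c j)‖) ^ 2) := Real.sqrt_le_sqrt (sum_le_sum fun j _ => hterm j)
    _ = √(∑ j, ‖u (c j)‖ ^ 2) * weakl2 ξ := by
        simp_rw [mul_pow]
        rw [← mul_sum, Real.sqrt_mul (sq_nonneg _), Real.sqrt_sq (weakl2_nonneg ξ), mul_comm]

lemma norm_sum_smul_proj_comp_le {m : ℕ} (z : E →L[ℝ] EuclideanSpace ℝ (Fin m)) (a : Fin m → ℝ) :
    ‖∑ i, a i • (EuclideanSpace.proj i : EuclideanSpace ℝ (Fin m) →L[ℝ] ℝ).comp z‖ ≤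
      ‖z‖ * √(∑ i, a i ^ 2) := by
  have h : ∑ i, a i • (EuclideanSpace.proj i : EuclideanSpace ℝ (Fin m) →L[ℝ] ℝ).comp z =
      (innerSL ℝ (WithLp.toLp 2 a)).comp z := by
    ext p
    simp [PiLp.inner_apply, mul_comm]
  rw [h, mul_comm]
  refine (ContinuousLinearMap.opNorm_comp_le _ _).trans_eq ?_
  simp [EuclideanSpace.norm_eq]

lemma HSnorm_comp_le_pi2_dualCLM_mul_norm {n m : ℕ} (u : EuclideanSpace ℝ (Fin n) →L[ℝ] E)
    (z : E →L[ℝ] EuclideanSpace ℝ (Fin m)) : HSnorm (z.comp u) ≤ pi2 (dualCLM u) * ‖z‖ := by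
  set ξ : Fin m → StrongDual ℝ E := fun i => (EuclideanSpace.proj i).comp z
  have hHS : HSnorm (z.comp u) = √(∑ i, ‖dualCLM u (ξ i)‖ ^ 2) := by
    rw [HSnorm, ← Real.sqrt_eq_rpow]
    congr 1
    simp_rw [(EuclideanSpace.basisFun (Fin n) ℝ).norm_dual, EuclideanSpace.real_norm_sq_eq]
    rw [sum_comm]
    simp [ξ, dualCLM]
  have hξ : weakl2 ξ ≤ ‖z‖ :=
    weakl2_le_of_norm_sum_smul_le ξ (norm_nonneg z) (norm_sum_smul_proj_comp_le z)
  have hu : ∃ C, 0 ≤ C ∧ ∀ (k : ℕ) (η : Fin k → StrongDual ℝ E),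
      √(∑ i, ‖dualCLM u (η i)‖ ^ 2) ≤ C * weakl2 η :=
    ⟨_, Real.sqrt_nonneg _, fun _ => sqrt_sum_sq_norm_dualCLM_le (EuclideanSpace.basisFun _ ℝ) u⟩
  rw [hHS]
  exact (sqrt_sum_sq_norm_le_pi2_mul_weakl2 hu ξ).trans
    (mul_le_mul_of_nonneg_left hξ (pi2_nonneg _))

end TwoSummingAdjoint

lemma sqrt_mul_apxNum_comp_le {E : Type*} [NormedAddCommGroup E] [NormedSpace ℝ E] {n m : ℕ}
    (u : EuclideanSpace ℝ (Fin n) →L[ℝ] E) (v : E →L[ℝ] EuclideanSpace ℝ (Fin m)) {k : ℕ}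
    (hk : 1 ≤ k) : √k * apxNum (2 * k - 1) (v.comp u) ≤ pi2 (dualCLM u) * apxNum k v :=
  le_mul_apxNum hk (pi2_nonneg _) fun S hS => by
    have hSu : LinearMap.rank ((S.comp u : EuclideanSpace ℝ (Fin n) →L[ℝ] _) :
        EuclideanSpace ℝ (Fin n) →ₗ[ℝ] EuclideanSpace ℝ (Fin m)) < k :=
      (LinearMap.rank_comp_le_left (u : EuclideanSpace ℝ (Fin n) →ₗ[ℝ] E)
        (S : E →ₗ[ℝ] EuclideanSpace ℝ (Fin m))).trans_lt hS
    have hsplit : v.comp u = (v - S).comp u + S.comp u := by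
      rw [ContinuousLinearMap.sub_comp, sub_add_cancel]
    calc √k * apxNum (2 * k - 1) (v.comp u) ≤ √k * apxNum k ((v - S).comp u) := by
          rw [hsplit, show 2 * k - 1 = k + k - 1 by omega]
          gcongr
          exact apxNum_add_le_of_rank_lt hk _ _ hSu
      _ ≤ HSnorm ((v - S).comp u) := sqrt_mul_apxNum_le_HSnorm _ hk
      _ ≤ pi2 (dualCLM u) * ‖v - S‖ := HSnorm_comp_le_pi2_dualCLM_mul_norm u (v - S)

theorem stmt_11_general {E : Type*} [NormedAddCommGroup E] [NormedSpace ℝ E]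
    (hE : WeakType2 E) :
    ∃ C : ℝ, 0 < C ∧
      ∀ (n : ℕ) (u : EuclideanSpace ℝ (Fin n) →L[ℝ] E)
        (v : E →L[ℝ] EuclideanSpace ℝ (Fin n)) (k : ℕ), 1 ≤ k →
        (k : ℝ) * apxNum k (v.comp u) ≤ C * ellStar v * pi2 (dualCLM u) := by
  obtain ⟨C, hC, hWT⟩ := hE
  refine ⟨2 * C, by positivity, fun n u v m hm => ?_⟩
  set k := (m + 1) / 2
  have hk : 1 ≤ k := by omega
  have hmk : (m : ℝ) ≤ 2 * √k * √k := by
    rw [mul_assoc, Real.mul_self_sqrt (Nat.cast_nonneg _)]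
    exact_mod_cast (by omega : m ≤ 2 * k)
  have hanti := apxNum_antitone (by omega) (by omega : 2 * k - 1 ≤ m) (v.comp u)
  calc (m : ℝ) * apxNum m (v.comp u)
      ≤ 2 * √k * (√k * apxNum (2 * k - 1) (v.comp u)) := by
        nlinarith [apxNum_nonneg m (v.comp u), Real.sqrt_nonneg k]
    _ ≤ 2 * √k * (pi2 (dualCLM u) * apxNum k v) :=
        mul_le_mul_of_nonneg_left (sqrt_mul_apxNum_comp_le u v hk) (by positivity)
    _ = 2 * pi2 (dualCLM u) * (√k * apxNum k v) := by ring
    _ ≤ 2 * pi2 (dualCLM u) * (C * ellStar v) :=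
        mul_le_mul_of_nonneg_left (hWT n v k hk) (by linarith [pi2_nonneg (dualCLM u)])
    _ = 2 * C * ellStar v * pi2 (dualCLM u) := by ring

theorem stmt_11 {E : Type*} [NormedAddCommGroup E] [NormedSpace ℝ E] [CompleteSpace E]
    (hE : WeakType2 E) :
    ∃ C : ℝ, 0 < C ∧
      ∀ (n : ℕ) (u : EuclideanSpace ℝ (Fin n) →L[ℝ] E)
        (v : E →L[ℝ] EuclideanSpace ℝ (Fin n)) (k : ℕ), 1 ≤ k →
        (k : ℝ) * apxNum k (v.comp u) ≤ C * ellStar v * pi2 (dualCLM u) :=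
  stmt_11_general hE

end
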